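/- arXiv:2011.05467 — 7 statements merged into one kernel-verified Lean document; each statement's English description precedes it below -/
import Mathlib

section
/- Let 1 ≤ k ≤ t be integers and let f : {1,…,t} → ℝ. Let μ_k denote the expectation of ∏_{i∈s} f(i) over a uniformly random k-element subset s of {1,…,t}, and let μ₁ = (1/t)·Σ_{i=1}^t f(i). Then |μ_k − μ₁^k| ≤ (k²/t)·(max_{1≤i≤t} |f(i)|)^k. -/
open Finset

private lemma weier (g : ℕ → ℝ) (n : ℕ) (h0 : ∀ i ∈ range n, 0 ≤ g i)
    (h1 : ∀ i ∈ range n, g i ≤ 1) :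
    1 - ∑ i ∈ range n, g i ≤ ∏ i ∈ range n, (1 - g i) := by
  induction n with
  | zero => simp
  | succ n ih =>
    have h0' : ∀ i ∈ range n, 0 ≤ g i := fun i hi => h0 i (by simp at hi ⊢; omega)
    have h1' : ∀ i ∈ range n, g i ≤ 1 := fun i hi => h1 i (by simp at hi ⊢; omega)
    have hgn0 : 0 ≤ g n := h0 n (self_mem_range_succ n)
    have hgn1 : g n ≤ 1 := h1 n (self_mem_range_succ n)
    have hS0 : 0 ≤ ∑ i ∈ range n, g i := Finset.sum_nonneg h0'
    rw [Finset.prod_range_succ, Finset.sum_range_succ]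
    have := mul_le_mul_of_nonneg_right (ih h0' h1') (by linarith : (0:ℝ) ≤ 1 - g n)
    nlinarith [mul_nonneg hS0 hgn0]

private lemma card_fiber (t k : ℕ) (s : Finset (Fin t)) (hs : s.card = k) :
    ((Finset.univ : Finset (Fin k → Fin t)).filter
      (fun p => Function.Injective p ∧ Finset.image p Finset.univ = s)).card = (Nat.factorial k) := by
  classical
  have hcard : ((Finset.univ : Finset (Fin k → Fin t)).filter
      (fun p => Function.Injective p ∧ Finset.image p Finset.univ = s)).card
      = (Finset.univ : Finset (Fin k ↪ ↥s)).card := by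
    apply Finset.card_bij'
      (i := fun p hp => (⟨fun j => (⟨p j, by
          have hp' := (Finset.mem_filter.1 hp).2
          rw [← hp'.2]; exact Finset.mem_image_of_mem _ (Finset.mem_univ j)⟩ : ↥s),
        fun a b h => (Finset.mem_filter.1 hp).2.1 (congrArg Subtype.val h)⟩ : Fin k ↪ ↥s))
      (j := fun e _ => fun j => (e j : Fin t))
    · intro p hp; exact Finset.mem_univ _
    · intro p hp; rfl
    · intro e he; ext j; rfl
    · intro e _
      have hinj : Function.Injective (fun j => (e j : Fin t)) :=
        fun a b h => e.injective (Subtype.ext h)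
      have hsub : Finset.image (fun j => (e j : Fin t)) Finset.univ ⊆ s := by
        intro x hx
        obtain ⟨j, _, rfl⟩ := Finset.mem_image.1 hx
        exact (e j).2
      have heq : Finset.image (fun j => (e j : Fin t)) Finset.univ = s := by
        apply Finset.eq_of_subset_of_card_le hsub
        rw [Finset.card_image_of_injective _ hinj, Finset.card_univ, Fintype.card_fin, hs]
      exact Finset.mem_filter.2 ⟨Finset.mem_univ _, hinj, heq⟩
  rw [hcard, Finset.card_univ, Fintype.card_embedding_eq, Fintype.card_coe, hs,
    Fintype.card_fin, Nat.descFactorial_self]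

private lemma key_sum (t k : ℕ) (f : Fin t → ℝ) :
    ∑ p ∈ (Finset.univ : Finset (Fin k → Fin t)).filter Function.Injective,
      ∏ j, f (p j)
    = ((Nat.factorial k) : ℝ) * ∑ s ∈ Finset.powersetCard k (Finset.univ : Finset (Fin t)),
        ∏ i ∈ s, f i := by
  classical
  have hmaps : ∀ p ∈ (Finset.univ : Finset (Fin k → Fin t)).filter Function.Injective,
      Finset.image p Finset.univ ∈ Finset.powersetCard k (Finset.univ : Finset (Fin t)) := by
    intro p hp
    refine Finset.mem_powersetCard.2 ⟨Finset.subset_univ _, ?_⟩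
    rw [Finset.card_image_of_injective _ (Finset.mem_filter.1 hp).2, Finset.card_univ,
      Fintype.card_fin]
  rw [← Finset.sum_fiberwise_of_maps_to hmaps (fun p => ∏ j, f (p j)), Finset.mul_sum]
  apply Finset.sum_congr rfl
  intro s hs
  have hs' : s.card = k := (Finset.mem_powersetCard.1 hs).2
  have : ∀ p ∈ (((Finset.univ : Finset (Fin k → Fin t)).filter
        Function.Injective).filter (fun p => Finset.image p Finset.univ = s)),
      (∏ j, f (p j)) = ∏ i ∈ s, f i := by
    intro p hp
    rw [Finset.mem_filter, Finset.mem_filter] at hp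
    rw [← hp.2, Finset.prod_image (fun x _ y _ h => hp.1.2 h)]
  rw [Finset.sum_congr rfl this, Finset.sum_const, Finset.filter_filter]
  rw [card_fiber t k s hs', nsmul_eq_mul]

/-- **Complete complex and near independence.**
For `1 ≤ k ≤ t` and `f : {1,…,t} → ℝ`, the expectation `μ_k` of `∏_{i∈s} f i` over a
uniformly random `k`-element subset `s` of `{1,…,t}` satisfies
`|μ_k − μ₁^k| ≤ (k²/t)·(max_i |f i|)^k`, where `μ₁` is the average of `f`. -/
theorem stmt_0 (t k : ℕ) (hk : 1 ≤ k) (hkt : k ≤ t) (f : Fin t → ℝ) :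
    |(∑ s ∈ Finset.powersetCard k (Finset.univ : Finset (Fin t)), ∏ i ∈ s, f i)
        / (t.choose k : ℝ)
      - ((∑ i, f i) / (t : ℝ)) ^ k|
    ≤ ((k : ℝ) ^ 2 / (t : ℝ)) * (⨆ i, |f i|) ^ k := by
  classical
  have ht : 1 ≤ t := hk.trans hkt
  have ht0 : (0:ℝ) < t := by exact_mod_cast ht
  set M : ℝ := ⨆ i, |f i| with hM
  haveI : Nonempty (Fin t) := ⟨⟨0, ht⟩⟩
  have hMi : ∀ i, |f i| ≤ M := fun i => le_ciSup (f := fun i => |f i|) (Set.Finite.bddAbove (Set.finite_range _)) i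
  have hM0 : 0 ≤ M := le_trans (abs_nonneg _) (hMi ⟨0, ht⟩)
  set N : ℝ := ∑ s ∈ Finset.powersetCard k (Finset.univ : Finset (Fin t)), ∏ i ∈ s, f i
  set A : ℝ := ∑ p : Fin k → Fin t, ∏ j, f (p j) with hA
  have hAeq : ((∑ i, f i)) ^ k = A := Fintype.sum_pow f k
  set B : ℝ := ∑ p ∈ (Finset.univ : Finset (Fin k → Fin t)).filter Function.Injective,
      ∏ j, f (p j) with hB
  have hBN : B = ((Nat.factorial k) : ℝ) * N := key_sum t k f
  set D : ℕ := t.descFactorial k with hD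
  have hDpos : 0 < D := Nat.pos_of_ne_zero (fun h => absurd (Nat.descFactorial_eq_zero_iff_lt.1 h) (not_lt.2 hkt))
  have hDfc : D = (Nat.factorial k) * t.choose k := Nat.descFactorial_eq_factorial_mul_choose t k
  have hchoose_pos : 0 < t.choose k := Nat.choose_pos hkt
  -- card of injective filter
  have hcardinj : ((Finset.univ : Finset (Fin k → Fin t)).filter Function.Injective).card = D := by
    rw [← Fintype.card_subtype,
      Fintype.card_congr (Equiv.subtypeInjectiveEquivEmbedding (Fin k) (Fin t)),
      Fintype.card_embedding_eq, Fintype.card_fin, Fintype.card_fin]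
  -- bounds on products
  have hprod_bound : ∀ p : Fin k → Fin t, |∏ j, f (p j)| ≤ M ^ k := by
    intro p
    rw [Finset.abs_prod]
    calc ∏ j, |f (p j)| ≤ ∏ _j : Fin k, M :=
          Finset.prod_le_prod (fun j _ => abs_nonneg _) (fun j _ => hMi _)
      _ = M ^ k := by rw [Finset.prod_const, Finset.card_univ, Fintype.card_fin]
  have hBbound : |B| ≤ (D : ℝ) * M ^ k := by
    calc |B| ≤ ∑ p ∈ (Finset.univ : Finset (Fin k → Fin t)).filter Function.Injective,
          |∏ j, f (p j)| := Finset.abs_sum_le_sum_abs _ _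
      _ ≤ ∑ _p ∈ (Finset.univ : Finset (Fin k → Fin t)).filter Function.Injective, M ^ k :=
          Finset.sum_le_sum (fun p _ => hprod_bound p)
      _ = (D : ℝ) * M ^ k := by rw [Finset.sum_const, hcardinj, nsmul_eq_mul]
  have hABbound : |A - B| ≤ ((t:ℝ) ^ k - (D:ℝ)) * M ^ k := by
    have hsplit : A = B + ∑ p ∈ (Finset.univ : Finset (Fin k → Fin t)).filter
        (fun p => ¬ Function.Injective p), ∏ j, f (p j) := by
      rw [hA, hB, Finset.sum_filter_add_sum_filter_not]
    have hcardn : (((Finset.univ : Finset (Fin k → Fin t))).filter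
        (fun p => ¬ Function.Injective p)).card = t ^ k - D := by
      have := Finset.card_filter_add_card_filter_not
        (s := (Finset.univ : Finset (Fin k → Fin t))) Function.Injective
      rw [hcardinj, Finset.card_univ, Fintype.card_fun, Fintype.card_fin, Fintype.card_fin] at this
      omega
    have hDle : D ≤ t ^ k := Nat.descFactorial_le_pow t k
    calc |A - B| = |∑ p ∈ (Finset.univ : Finset (Fin k → Fin t)).filter
          (fun p => ¬ Function.Injective p), ∏ j, f (p j)| := by rw [hsplit]; ring_nf
      _ ≤ ∑ p ∈ (Finset.univ : Finset (Fin k → Fin t)).filter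
          (fun p => ¬ Function.Injective p), |∏ j, f (p j)| := Finset.abs_sum_le_sum_abs _ _
      _ ≤ ∑ _p ∈ (Finset.univ : Finset (Fin k → Fin t)).filter
          (fun p => ¬ Function.Injective p), M ^ k :=
          Finset.sum_le_sum (fun p _ => hprod_bound p)
      _ = ((t ^ k - D : ℕ) : ℝ) * M ^ k := by rw [Finset.sum_const, hcardn, nsmul_eq_mul]
      _ = ((t:ℝ) ^ k - (D:ℝ)) * M ^ k := by
          rw [Nat.cast_sub hDle, Nat.cast_pow]
  -- the near-1 ratio
  have htk0 : (0:ℝ) < (t:ℝ) ^ k := pow_pos ht0 k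
  have hD0 : (0:ℝ) < (D:ℝ) := by exact_mod_cast hDpos
  set ε : ℝ := 1 - (D:ℝ) / (t:ℝ) ^ k with hε
  have hε0 : 0 ≤ ε := by
    have : (D:ℝ) ≤ (t:ℝ) ^ k := by
      have := Nat.descFactorial_le_pow t k
      exact_mod_cast this
    rw [hε]
    have := div_le_one_of_le₀ this htk0.le
    linarith
  have hεbound : ε ≤ (k:ℝ) ^ 2 / (2 * t) := by
    have hDprod : (D:ℝ) / (t:ℝ) ^ k = ∏ i ∈ range k, (1 - (i:ℝ)/t) := by
      rw [hD, Nat.descFactorial_eq_prod_range, Nat.cast_prod]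
      rw [show ((t:ℝ)) ^ k = ∏ _i ∈ range k, (t:ℝ) by rw [Finset.prod_const, Finset.card_range]]
      rw [← Finset.prod_div_distrib]
      apply Finset.prod_congr rfl
      intro i hi
      have hik : i < k := Finset.mem_range.1 hi
      rw [Nat.cast_sub (le_of_lt (lt_of_lt_of_le hik hkt))]
      field_simp
    have hw : 1 - ∑ i ∈ range k, (i:ℝ)/t ≤ ∏ i ∈ range k, (1 - (i:ℝ)/t) := by
      apply weier
      · intro i _; positivity
      · intro i hi
        have hik : i < k := Finset.mem_range.1 hi
        rw [div_le_one ht0]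
        exact_mod_cast le_of_lt (lt_of_lt_of_le hik hkt)
    have hsum : ∑ i ∈ range k, (i:ℝ)/t = ((∑ i ∈ range k, i : ℕ) : ℝ) / t := by
      rw [Nat.cast_sum, Finset.sum_div]
    have hgauss : ((∑ i ∈ range k, i : ℕ) : ℝ) * 2 = (k:ℝ) * ((k:ℝ) - 1) := by
      have := Finset.sum_range_id_mul_two k
      have h2 : (((∑ i ∈ range k, i) * 2 : ℕ) : ℝ) = ((k * (k-1) : ℕ):ℝ) := by
        exact_mod_cast congrArg (Nat.cast : ℕ → ℝ) this
      rw [Nat.cast_mul, Nat.cast_mul, Nat.cast_sub hk] at h2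
      simpa using h2
    have hsum2 : ∑ i ∈ range k, (i:ℝ)/t = (k:ℝ) * ((k:ℝ) - 1) / (2 * t) := by
      rw [hsum]; rw [← hgauss]; ring
    rw [hε, hDprod]
    have hk1 : (1:ℝ) ≤ (k:ℝ) := by exact_mod_cast hk
    have : (k:ℝ) * ((k:ℝ) - 1) ≤ (k:ℝ)^2 := by nlinarith
    have h2t : (0:ℝ) < 2 * t := by linarith
    calc 1 - ∏ i ∈ range k, (1 - (i:ℝ)/t) ≤ ∑ i ∈ range k, (i:ℝ)/t := by linarith [hw]
      _ = (k:ℝ) * ((k:ℝ) - 1) / (2 * t) := hsum2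
      _ ≤ (k:ℝ)^2 / (2 * t) := by gcongr
  -- final assembly
  have hfac0 : (((Nat.factorial k) : ℕ) : ℝ) ≠ 0 := by exact_mod_cast (Nat.factorial_ne_zero k)
  have hDcast : (D:ℝ) = (((Nat.factorial k) : ℕ) : ℝ) * ((t.choose k : ℕ) : ℝ) := by exact_mod_cast hDfc
  have hμk : N / (t.choose k : ℝ) = B / (D:ℝ) := by
    rw [hBN, hDcast, mul_div_mul_left _ _ hfac0]
  have hgoalrw : ((∑ i, f i) / (t:ℝ)) ^ k = A / (t:ℝ)^k := by rw [div_pow, hAeq]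
  rw [hμk, hgoalrw]
  have key1 : B/(D:ℝ) - A/(t:ℝ)^k = (B/(D:ℝ)) * ε - (A - B)/(t:ℝ)^k := by
    rw [hε]; field_simp; ring
  rw [key1]
  have h1 : |B/(D:ℝ)| ≤ M^k := by
    rw [abs_div, abs_of_pos hD0, div_le_iff₀ hD0]
    calc |B| ≤ (D:ℝ) * M^k := hBbound
      _ = M^k * (D:ℝ) := by ring
  have hεt : ε * (t:ℝ)^k = (t:ℝ)^k - (D:ℝ) := by
    rw [hε]; field_simp
  have h2 : |(A-B)/(t:ℝ)^k| ≤ ε * M^k := by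
    rw [abs_div, abs_of_pos htk0, div_le_iff₀ htk0]
    calc |A - B| ≤ ((t:ℝ)^k - (D:ℝ)) * M^k := hABbound
      _ = ε * M^k * (t:ℝ)^k := by rw [← hεt]; ring
  calc |B/(D:ℝ) * ε - (A - B)/(t:ℝ)^k|
      ≤ |B/(D:ℝ) * ε| + |(A - B)/(t:ℝ)^k| := abs_sub _ _
    _ ≤ M^k * ε + ε * M^k := by
        refine add_le_add ?_ h2
        rw [abs_mul, abs_of_nonneg hε0]
        exact mul_le_mul_of_nonneg_right h1 hε0
    _ = 2 * ε * M^k := by ring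
    _ ≤ (k:ℝ)^2 / (t:ℝ) * M^k := by
        refine mul_le_mul_of_nonneg_right ?_ (pow_nonneg hM0 k)
        have : 2 * ((k:ℝ)^2 / (2 * t)) = (k:ℝ)^2 / t := by field_simp
        linarith [hεbound]
end

section
/- Let 0 < ε < 1/2, 0 < β < 1/4 − ε/2 and μ₀ > 0. Let (E, s) be a k-uniform hypergraph structure on [n] and suppose the direct sum lifting dsum : F₂ⁿ → F₂^E is a (1/2+2μ₀, 2ε)-parity sampler. Let C₁ ⊆ F₂ⁿ be nonempty and C_k = dsum(C₁). Suppose ỹ ∈ F₂^E satisfies Δ(ỹ, C_k) < 1/4 − ε/2 − β, and let z* ∈ C₁ be such that y* = dsum(z*) attains the minimum of Δ(·, ỹ) over C_k. Then for every z ∈ F₂ⁿ with Δ(dsum(z), ỹ) < 1/4 − ε/2, either Δ(z*, z) ≤ 1/4 − μ₀ or Δ(z*, z̄) ≤ 1/4 − μ₀, where z̄ denotes the coordinatewise complement of z. -/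
open Finset

/-- Relative Hamming distance between two words (uniform measure on coordinates). -/
noncomputable def relHam {m : Type*} [Fintype m] {α : Type*} [DecidableEq α]
    (x y : m → α) : ℝ :=
  ((Finset.univ.filter fun j => x j ≠ y j).card : ℝ) / (Fintype.card m : ℝ)

/-- The bias of a word over `F₂`: `|E_j (−1)^{z_j}|`. -/
noncomputable def bias2 {m : Type*} [Fintype m] (z : m → ZMod 2) : ℝ :=
  |∑ j, (-1 : ℝ) ^ (z j).val| / (Fintype.card m : ℝ)

/-- The direct sum lifting `(dsum z)_e = Σ_{i ∈ s e} z_i (mod 2)`. -/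
def dsumLift {n : ℕ} {E : Type*} (s : E → Finset (Fin n))
    (z : Fin n → ZMod 2) (e : E) : ZMod 2 :=
  ∑ i ∈ s e, z i

/-!
If `z` and its complement are both farther than `1/4 − μ₀` from `z*`, then `z* + z` has bias at
most `1/2 + 2μ₀`, so the parity sampler makes `dsum z* + dsum z = dsum (z* + z)` have bias at most
`2ε`, i.e. `Δ(dsum z*, dsum z) ≥ 1/2 − ε`. But through `ỹ` the triangle inequality gives
`Δ(dsum z*, dsum z) < (1/4 − ε/2 − β) + (1/4 − ε/2) ≤ 1/2 − ε`.
-/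

section RelHam

variable {m : Type*} [Fintype m]

theorem relHam_eq_hammingDist {α : Type*} [DecidableEq α] (x y : m → α) :
    relHam x y = hammingDist x y / Fintype.card m := rfl

theorem relHam_comm {α : Type*} [DecidableEq α] (x y : m → α) : relHam x y = relHam y x := by
  simp only [relHam_eq_hammingDist, hammingDist_comm]

theorem relHam_triangle {α : Type*} [DecidableEq α] (x y z : m → α) :
    relHam x z ≤ relHam x y + relHam y z := by
  simp only [relHam_eq_hammingDist, ← add_div]
  gcongr
  exact_mod_cast hammingDist_triangle x y z

theorem relHam_add_one [Nonempty m] (x y : m → ZMod 2) :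
    relHam x (fun j => y j + 1) = 1 - relHam x y := by
  have hcard : (Fintype.card m : ℝ) ≠ 0 := by positivity
  have hne_add_one : ∀ a b : ZMod 2, a ≠ b + 1 ↔ ¬a ≠ b := by decide
  have hsplit := card_filter_add_card_filter_not (s := (univ : Finset m)) (fun j => x j ≠ y j)
  rw [card_univ] at hsplit
  simp only [relHam, hne_add_one]
  rw [eq_sub_iff_add_eq, ← add_div, div_eq_one_iff_eq hcard]
  exact_mod_cast (add_comm _ _).trans hsplit

end RelHam

theorem neg_one_pow_val_add (a b : ZMod 2) :
    (-1 : ℝ) ^ (a + b).val = 1 - 2 * if a ≠ b then 1 else 0 := by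
  have hval : ∀ a b : ZMod 2, (a + b).val = if a ≠ b then 1 else 0 := by decide
  rw [hval]
  split_ifs <;> norm_num

theorem bias2_add {m : Type*} [Fintype m] [Nonempty m] (x y : m → ZMod 2) :
    bias2 (x + y) = |1 - 2 * relHam x y| := by
  have hcard : (0 : ℝ) < Fintype.card m := by positivity
  have hsum : ∑ j, (-1 : ℝ) ^ (x j + y j).val =
      Fintype.card m - 2 * (univ.filter fun j => x j ≠ y j).card := by
    simp only [neg_one_pow_val_add, sum_sub_distrib, ← mul_sum, sum_boole, sum_const, card_univ,
      nsmul_eq_mul, mul_one]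
  simp only [bias2, relHam, Pi.add_apply, hsum]
  rw [← abs_of_pos hcard, ← abs_div, abs_of_pos hcard]
  congr 1
  field_simp

theorem dsumLift_add {n : ℕ} {E : Type*} (s : E → Finset (Fin n)) (x y : Fin n → ZMod 2) :
    dsumLift s (x + y) = dsumLift s x + dsumLift s y := by
  funext e
  simp only [dsumLift, Pi.add_apply, sum_add_distrib]

theorem relHam_le_or_relHam_add_one_le_of_relHam_dsumLift_lt {n : ℕ} (hn : 0 < n)
    {E : Type*} [Fintype E] [Nonempty E] {s : E → Finset (Fin n)} {ε μ₀ : ℝ}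
    (hps : ∀ z : Fin n → ZMod 2, bias2 z ≤ 1/2 + 2*μ₀ → bias2 (dsumLift s z) ≤ 2*ε)
    {x y : Fin n → ZMod 2} (hxy : relHam (dsumLift s x) (dsumLift s y) < 1/2 - ε) :
    relHam x y ≤ 1/4 - μ₀ ∨ relHam x (fun i => y i + 1) ≤ 1/4 - μ₀ := by
  have : Nonempty (Fin n) := Fin.pos_iff_nonempty.mp hn
  by_contra! hfar
  obtain ⟨hfar, hfar_compl⟩ := hfar
  rw [relHam_add_one] at hfar_compl
  have hbias : bias2 (x + y) ≤ 1/2 + 2*μ₀ := by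
    rw [bias2_add, abs_le]
    constructor <;> linarith
  have hlift_bias := hps _ hbias
  rw [dsumLift_add, bias2_add, abs_le] at hlift_bias
  linarith [hlift_bias.1]

theorem stmt_2_general (n : ℕ) (hn : 0 < n)
    (ε β μ₀ : ℝ) (hβ0 : 0 < β)
    (E : Type) [Fintype E] [Nonempty E]
    (s : E → Finset (Fin n))
    (hps : ∀ z : Fin n → ZMod 2, bias2 z ≤ 1/2 + 2*μ₀ → bias2 (dsumLift s z) ≤ 2*ε)
    (yt : E → ZMod 2)
    (zstar : Fin n → ZMod 2)
    (hclose : relHam (dsumLift s zstar) yt < 1/4 - ε/2 - β)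
    (z : Fin n → ZMod 2) (hz : relHam (dsumLift s z) yt < 1/4 - ε/2) :
    relHam zstar z ≤ 1/4 - μ₀ ∨ relHam zstar (fun i => z i + 1) ≤ 1/4 - μ₀ := by
  refine relHam_le_or_relHam_add_one_le_of_relHam_dsumLift_lt hn hps ?_
  calc relHam (dsumLift s zstar) (dsumLift s z)
      ≤ relHam (dsumLift s zstar) yt + relHam yt (dsumLift s z) := relHam_triangle _ _ _
    _ < 1/2 - ε := by linarith [relHam_comm yt (dsumLift s z)]

/-- **Unique decoding on parity samplers.** If the direct sum lifting over a `k`-uniform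
hypergraph structure is a `(1/2+2μ₀, 2ε)`-parity sampler, `ỹ` has distance
`< 1/4 − ε/2 − β` from `C_k = dsum(C₁)` attained by `z* ∈ C₁`, then any `z` with
`Δ(dsum z, ỹ) < 1/4 − ε/2` has `z` or its complement within distance `1/4 − μ₀` of `z*`. -/
theorem stmt_2 (n k : ℕ) (hn : 0 < n)
    (ε β μ₀ : ℝ) (hε0 : 0 < ε) (hε : ε < 1/2) (hβ0 : 0 < β) (hβ : β < 1/4 - ε/2)
    (hμ₀ : 0 < μ₀)
    (E : Type) [Fintype E] [Nonempty E]
    (s : E → Finset (Fin n)) (hs : ∀ e, (s e).card = k)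
    (hps : ∀ z : Fin n → ZMod 2, bias2 z ≤ 1/2 + 2*μ₀ → bias2 (dsumLift s z) ≤ 2*ε)
    (C₁ : Set (Fin n → ZMod 2)) (hC₁ : C₁.Nonempty)
    (yt : E → ZMod 2)
    (zstar : Fin n → ZMod 2) (hzstar : zstar ∈ C₁)
    (hmin : ∀ y ∈ (dsumLift s) '' C₁, relHam (dsumLift s zstar) yt ≤ relHam y yt)
    (hclose : relHam (dsumLift s zstar) yt < 1/4 - ε/2 - β)
    (z : Fin n → ZMod 2) (hz : relHam (dsumLift s z) yt < 1/4 - ε/2) :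
    relHam zstar z ≤ 1/4 - μ₀ ∨ relHam zstar (fun i => z i + 1) ≤ 1/4 - μ₀ :=
  stmt_2_general n hn ε β μ₀ hβ0 E s hps yt zstar hclose z hz
end

section
/- Let S be a nonempty finite set with a probability distribution Π, and let Ẽ be a linear functional on ℝ[X_s : s ∈ S] with Ẽ[1] = 1 and Ẽ[p²] ≥ 0 for every polynomial p of total degree at most 1 (a degree-2 pseudo-expectation). Let y : S → {−1, 1} and β ≥ 0. If |E_{s∼Π} y_s·Ẽ[X_s]| ≥ β, then E_{s,t∼Π×Π} (Ẽ[X_s X_t])² ≥ β⁴. -/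
open Finset MvPolynomial

/-- **Correlation implies an entropic lower bound.** Let `Et` be a degree-2
pseudo-expectation on `ℝ[X_s : s ∈ S]` (i.e. `Et 1 = 1` and `Et (p²) ≥ 0` for every
polynomial `p` of total degree at most `1`), `W` a probability distribution on `S`,
and `y : S → {−1,1}`. If `|E_{s∼W} y_s·Et[X_s]| ≥ β`, then
`E_{s,t∼W×W} (Et[X_s X_t])² ≥ β⁴`. -/
theorem stmt_5 (S : Type) [Fintype S] [Nonempty S]
    (W : S → ℝ) (hW0 : ∀ s, 0 ≤ W s) (hW1 : ∑ s, W s = 1)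
    (Et : MvPolynomial S ℝ →ₗ[ℝ] ℝ)
    (hE1 : Et 1 = 1)
    (hE2 : ∀ p : MvPolynomial S ℝ, p.totalDegree ≤ 1 → 0 ≤ Et (p ^ 2))
    (y : S → ℝ) (hy : ∀ s, y s = 1 ∨ y s = -1)
    (β : ℝ) (hβ : 0 ≤ β)
    (hcorr : β ≤ |∑ s, W s * (y s * Et (X s))|) :
    β ^ 4 ≤ ∑ s, ∑ t, W s * W t * (Et (X s * X t)) ^ 2 := by
  classical
  set c : S → ℝ := fun s => W s * y s with hc
  set v : MvPolynomial S ℝ := ∑ s, c s • X s with hv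
  have hEv : Et v = ∑ s, W s * (y s * Et (X s)) := by
    simp [hv, map_sum, hc, mul_assoc]
  have hv2 : v * v = ∑ s, ∑ t, (c s * c t) • (X (σ := S) s * X t) := by
    rw [hv, Finset.sum_mul_sum]
    exact Finset.sum_congr rfl fun s _ => Finset.sum_congr rfl fun t _ =>
      (smul_mul_smul_comm _ _ _ _)
  have hEv2 : Et (v * v) = ∑ s, ∑ t, c s * c t * Et (X s * X t) := by
    simp [hv2, map_sum]
  set e : ℝ := Et v with he
  -- degree bound
  have hdegv : v.totalDegree ≤ 1 := by
    refine (totalDegree_finset_sum _ _).trans (Finset.sup_le fun s _ => ?_)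
    exact (totalDegree_smul_le _ _).trans (by simp [totalDegree_X])
  have hdeg : (v - C e).totalDegree ≤ 1 :=
    (totalDegree_sub_C_le v e).trans hdegv
  -- pseudo Cauchy-Schwarz with constant
  have hexp : Et ((v - C e) ^ 2) = Et (v * v) - e ^ 2 := by
    have h1 : (v - C e) ^ 2 = v * v - C e * v - C e * v + C e * C e := by ring
    have hCC : (C e * C e : MvPolynomial S ℝ) = (e * e) • 1 := by
      rw [← C_mul, ← C_mul', mul_one]
    rw [h1, map_add, map_sub, map_sub, C_mul', map_smul, hCC, map_smul, hE1,
      smul_eq_mul, smul_eq_mul, ← he]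
    ring
  have hpos := hE2 _ hdeg
  have hkey : e ^ 2 ≤ Et (v * v) := by linarith [hexp ▸ hpos]
  have hβ2 : β ^ 2 ≤ Et (v * v) := by
    have h1 : β ^ 2 ≤ e ^ 2 := by
      rw [← sq_abs e]
      refine pow_le_pow_left₀ hβ ?_ 2
      rw [hEv]; exact hcorr
    linarith
  -- Cauchy-Schwarz over S × S
  have hCS : (Et (v * v)) ^ 2 ≤ ∑ s, ∑ t, W s * W t * (Et (X s * X t)) ^ 2 := by
    have h := Finset.sum_mul_sq_le_sq_mul_sq (Finset.univ : Finset (S × S))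
      (fun p => Real.sqrt (W p.1 * W p.2) * (y p.1 * y p.2))
      (fun p => Real.sqrt (W p.1 * W p.2) * Et (X p.1 * X p.2))
    have hsq : ∀ p : S × S, Real.sqrt (W p.1 * W p.2) ^ 2 = W p.1 * W p.2 :=
      fun p => Real.sq_sqrt (mul_nonneg (hW0 _) (hW0 _))
    have hy2 : ∀ s, y s ^ 2 = 1 := fun s => by rcases hy s with h | h <;> simp [h]
    have hleft : (∑ p : S × S, (Real.sqrt (W p.1 * W p.2) * (y p.1 * y p.2)) *
        (Real.sqrt (W p.1 * W p.2) * Et (X p.1 * X p.2))) = Et (v * v) := by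
      rw [hEv2, Fintype.sum_prod_type]
      refine Finset.sum_congr rfl fun s _ => Finset.sum_congr rfl fun t _ => ?_
      have h2 : Real.sqrt (W s * W t) * Real.sqrt (W s * W t) = W s * W t :=
        Real.mul_self_sqrt (mul_nonneg (hW0 s) (hW0 t))
      simp only [hc]
      linear_combination (y s * y t * Et (X s * X t)) * h2
    have hf : (∑ p : S × S, (Real.sqrt (W p.1 * W p.2) * (y p.1 * y p.2)) ^ 2) = 1 := by
      have : ∀ p : S × S, (Real.sqrt (W p.1 * W p.2) * (y p.1 * y p.2)) ^ 2
          = W p.1 * W p.2 := by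
        intro p
        rw [mul_pow, hsq, mul_pow, hy2, hy2, mul_one, mul_one]
      rw [Finset.sum_congr rfl fun p _ => this p, Fintype.sum_prod_type]
      simp [← Finset.mul_sum, ← Finset.sum_mul, hW1]
    have hg : (∑ p : S × S, (Real.sqrt (W p.1 * W p.2) * Et (X p.1 * X p.2)) ^ 2)
        = ∑ s, ∑ t, W s * W t * (Et (X s * X t)) ^ 2 := by
      rw [Fintype.sum_prod_type]
      refine Finset.sum_congr rfl fun s _ => Finset.sum_congr rfl fun t _ => ?_
      rw [mul_pow, hsq (s, t)]
    rw [hleft, hf, hg, one_mul] at h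
    exact h
  calc β ^ 4 = (β ^ 2) ^ 2 := by ring
    _ ≤ (Et (v * v)) ^ 2 := by
        have : 0 ≤ β ^ 2 := sq_nonneg β
        nlinarith
    _ ≤ _ := hCS
end

section
/- Let S be a nonempty finite set with a probability distribution Π, let y : S → {−1,1}, let Ẽ be a linear functional on ℝ[X_s : s ∈ S], and set Ψ := E_{s,t∼Π×Π}(Ẽ[X_s X_t])². Let ev_y denote the evaluation functional p ↦ p(y) (substituting X_s := y_s). Suppose Ẽ[(E_{s∼Π} y_s X_s)²] ≤ δ² and δ² ≤ Ψ ≤ 1. Then there exists α ∈ [0,1] such that the functional Ẽ' := (1−α)·Ẽ + α·ev_y satisfies E_{s,t∼Π×Π}(Ẽ'[X_s X_t])² ≤ Ψ − (Ψ − δ²)²/2. In particular, if Ψ ≥ 2δ², then E_{s,t∼Π×Π}(Ẽ'[X_s X_t])² ≤ Ψ − δ⁴/2. -/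
open Finset MvPolynomial

/-- **Progress lemma.** Let `W` be a probability distribution on a nonempty finite set `S`,
`y : S → {−1,1}`, `Et` a linear functional on `ℝ[X_s : s ∈ S]`, and
`Ψ := E_{s,t∼W×W}(Et[X_s X_t])²`. If `Et[(E_{s∼W} y_s X_s)²] ≤ δ²` and `δ² ≤ Ψ ≤ 1`,
then some convex combination `Ẽ' = (1−α)·Et + α·ev_y` satisfies
`E_{s,t}(Ẽ'[X_s X_t])² ≤ Ψ − (Ψ − δ²)²/2`; and if moreover `Ψ ≥ 2δ²`, then
`E_{s,t}(Ẽ'[X_s X_t])² ≤ Ψ − δ⁴/2`. -/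
theorem stmt_6 (S : Type) [Fintype S] [Nonempty S]
    (W : S → ℝ) (hW0 : ∀ s, 0 ≤ W s) (hW1 : ∑ s, W s = 1)
    (y : S → ℝ) (hy : ∀ s, y s = 1 ∨ y s = -1)
    (Et : MvPolynomial S ℝ →ₗ[ℝ] ℝ)
    (δ : ℝ)
    (hsmall : Et ((∑ s, MvPolynomial.C (W s * y s) * X s) ^ 2) ≤ δ ^ 2)
    (hlow : δ ^ 2 ≤ ∑ s, ∑ t, W s * W t * (Et (X s * X t)) ^ 2)
    (hup : ∑ s, ∑ t, W s * W t * (Et (X s * X t)) ^ 2 ≤ 1) :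
    ∃ α ∈ Set.Icc (0:ℝ) 1,
      (∑ s, ∑ t, W s * W t *
          (((1 - α) • Et + α • (MvPolynomial.aeval (R := ℝ) (S₁ := ℝ) y).toLinearMap)
            (X s * X t)) ^ 2
        ≤ (∑ s, ∑ t, W s * W t * (Et (X s * X t)) ^ 2)
          - ((∑ s, ∑ t, W s * W t * (Et (X s * X t)) ^ 2) - δ ^ 2) ^ 2 / 2)
      ∧ (2 * δ ^ 2 ≤ ∑ s, ∑ t, W s * W t * (Et (X s * X t)) ^ 2 →
          ∑ s, ∑ t, W s * W t *
            (((1 - α) • Et + α • (MvPolynomial.aeval (R := ℝ) (S₁ := ℝ) y).toLinearMap)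
              (X s * X t)) ^ 2
          ≤ (∑ s, ∑ t, W s * W t * (Et (X s * X t)) ^ 2) - δ ^ 4 / 2) := by
  classical
  set a : S → S → ℝ := fun s t => Et (X s * X t) with ha
  set Ψ : ℝ := ∑ s, ∑ t, W s * W t * (a s t) ^ 2 with hΨ
  have hEtC : ∀ (r : ℝ) (p : MvPolynomial S ℝ), Et (MvPolynomial.C r * p) = r * Et p := by
    intro r p
    rw [← MvPolynomial.smul_eq_C_mul, map_smul, smul_eq_mul]
  have hc : Et ((∑ s, MvPolynomial.C (W s * y s) * X s) ^ 2)
      = ∑ s, ∑ t, (W s * y s) * (W t * y t) * a s t := by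
    rw [sq, Finset.sum_mul_sum, map_sum]
    refine Finset.sum_congr rfl fun s _ => ?_
    rw [map_sum]
    refine Finset.sum_congr rfl fun t _ => ?_
    have h1 : (MvPolynomial.C (W s * y s) * X s) * (MvPolynomial.C (W t * y t) * X t)
        = MvPolynomial.C ((W s * y s) * (W t * y t)) * (X s * X t) := by
      simp only [map_mul]; ring
    rw [h1, hEtC]
  set c : ℝ := ∑ s, ∑ t, (W s * y s) * (W t * y t) * a s t with hcdef
  have hcδ : c ≤ δ ^ 2 := by rwa [hc] at hsmall
  set α : ℝ := (Ψ - δ ^ 2) / 2 with hα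
  have hA0 : 0 ≤ Ψ - δ ^ 2 := by linarith
  have hA1 : Ψ - δ ^ 2 ≤ 1 := by nlinarith [sq_nonneg δ]
  have hα0 : 0 ≤ α := by rw [hα]; linarith
  have hαhalf : α ≤ 1/2 := by rw [hα]; linarith
  refine ⟨α, ⟨hα0, by linarith⟩, ?_⟩
  have hval : ∀ s t : S,
      (((1 - α) • Et + α • (MvPolynomial.aeval (R := ℝ) (S₁ := ℝ) y).toLinearMap)
        (X s * X t)) = (1 - α) * a s t + α * (y s * y t) := by
    intro s t
    simp [LinearMap.add_apply, LinearMap.smul_apply, smul_eq_mul, map_mul, aeval_X, ha]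
  have hsq : ∀ s : S, y s ^ 2 = 1 := by
    intro s; rcases hy s with h | h <;> rw [h] <;> norm_num
  have hsum : ∑ s, ∑ t, W s * W t *
      (((1 - α) • Et + α • (MvPolynomial.aeval (R := ℝ) (S₁ := ℝ) y).toLinearMap)
        (X s * X t)) ^ 2
      = (1 - α) ^ 2 * Ψ + 2 * α * (1 - α) * c + α ^ 2 := by
    have expand : ∀ s t : S, W s * W t * ((1 - α) * a s t + α * (y s * y t)) ^ 2
        = (1 - α) ^ 2 * (W s * W t * (a s t) ^ 2)
          + (2 * α * (1 - α)) * ((W s * y s) * (W t * y t) * a s t)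
          + α ^ 2 * (W s * W t) := by
      intro s t
      have h1 : (y s * y t) ^ 2 = 1 := by rw [mul_pow, hsq s, hsq t, one_mul]
      linear_combination (W s * W t * α ^ 2) * h1
    calc ∑ s, ∑ t, W s * W t *
        (((1 - α) • Et + α • (MvPolynomial.aeval (R := ℝ) (S₁ := ℝ) y).toLinearMap)
          (X s * X t)) ^ 2
        = ∑ s, ∑ t, ((1 - α) ^ 2 * (W s * W t * (a s t) ^ 2)
            + (2 * α * (1 - α)) * ((W s * y s) * (W t * y t) * a s t)
            + α ^ 2 * (W s * W t)) := by
          refine Finset.sum_congr rfl fun s _ => Finset.sum_congr rfl fun t _ => ?_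
          rw [hval s t, expand s t]
      _ = (1 - α) ^ 2 * Ψ + 2 * α * (1 - α) * c + α ^ 2 * ((∑ s, W s) * (∑ t, W t)) := by
          rw [hΨ, hcdef, Finset.sum_mul_sum]
          simp only [Finset.sum_add_distrib, Finset.mul_sum]
      _ = (1 - α) ^ 2 * Ψ + 2 * α * (1 - α) * c + α ^ 2 := by rw [hW1]; ring
  rw [hsum]
  have hαα : 0 ≤ 2 * α * (1 - α) := by nlinarith
  have key : (1 - α) ^ 2 * Ψ + 2 * α * (1 - α) * c + α ^ 2 ≤ Ψ - (Ψ - δ ^ 2) ^ 2 / 2 := by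
    have h2 : 2 * α * (1 - α) * c ≤ 2 * α * (1 - α) * δ ^ 2 := by nlinarith
    nlinarith [sq_nonneg (Ψ - δ ^ 2), mul_nonneg hA0 (sub_nonneg.mpr hup),
      mul_nonneg (mul_nonneg hA0 hA0) (sub_nonneg.mpr hup)]
  refine ⟨key, fun h2δ => ?_⟩
  have : δ ^ 4 ≤ (Ψ - δ ^ 2) ^ 2 := by nlinarith [sq_nonneg δ]
  linarith
end

section
/- Let E be a nonempty finite set with the uniform measure, let ε₀ > 0 and 0 < ε < 1, and let lift : {−1,1}ⁿ → {−1,1}^E be multiplicative (lift(z ⊙ z') = lift(z) ⊙ lift(z')) and a (1/2+ε₀, 2ε)-parity sampler. Let C₁ ⊆ {−1,1}ⁿ, C_k = lift(C₁), ỹ ∈ {−1,1}^E, and L = { y ∈ C_k : Δ(y, ỹ) ≤ 1/2 − √ε }. Suppose M ⊆ {−1,1}ⁿ is a finite set such that for every y ∈ L there exists z' ∈ M with |E_{e∈E} y_e · lift(z')_e| > 2ε (a 2ε-bias cover of L). Let Dec : {−1,1}ⁿ → {−1,1}ⁿ be any function such that for all w ∈ {−1,1}ⁿ and z ∈ C₁,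 Δ(w, z) ≤ 1/4 − ε₀/2 implies Dec(w) = z (a unique decoder for C₁ of radius 1/4 − ε₀/2). Then L ⊆ { lift(Dec(z')) : z' ∈ M } ∪ { lift(Dec(−z')) : z' ∈ M }. -/
open Finset

/-- A word over `{−1,1}`: every coordinate is `1` or `−1`. -/
def IsSignWord {m : Type*} (z : m → ℝ) : Prop := ∀ j, z j = 1 ∨ z j = -1

/-- Relative Hamming distance between two real-valued words (uniform measure). -/
noncomputable def relHamR {m : Type*} [Fintype m] (x y : m → ℝ) : ℝ :=
  ((Finset.univ.filter fun j => x j ≠ y j).card : ℝ) / (Fintype.card m : ℝ)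

lemma sign_prod {a b : ℝ} (ha : a = 1 ∨ a = -1) (hb : b = 1 ∨ b = -1) :
    a * b = 1 - 2 * (if a ≠ b then (1:ℝ) else 0) := by
  rcases ha with rfl | rfl <;> rcases hb with rfl | rfl <;> norm_num

lemma sum_mul_sign {m : Type*} [Fintype m] {x y : m → ℝ}
    (hx : IsSignWord x) (hy : IsSignWord y) :
    (∑ j, x j * y j) = (Fintype.card m : ℝ)
      - 2 * ((Finset.univ.filter fun j => x j ≠ y j).card : ℝ) := by
  have : (∑ j, x j * y j) = ∑ j, (1 - 2 * (if x j ≠ y j then (1:ℝ) else 0)) :=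
    Finset.sum_congr rfl fun j _ => sign_prod (hx j) (hy j)
  rw [this, Finset.sum_sub_distrib, ← Finset.mul_sum, Finset.sum_boole,
    Finset.sum_const, Finset.card_univ, nsmul_eq_mul, mul_one]

lemma relHam_avg {m : Type*} [Fintype m] [Nonempty m] {x y : m → ℝ}
    (hx : IsSignWord x) (hy : IsSignWord y) :
    (∑ j, x j * y j) / (Fintype.card m : ℝ) = 1 - 2 * relHamR x y := by
  have hc : (0:ℝ) < (Fintype.card m : ℝ) := by positivity
  rw [sum_mul_sign hx hy, relHamR]
  field_simp

lemma relHam_neg {m : Type*} [Fintype m] {x y : m → ℝ}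
    (hx : IsSignWord x) (hy : IsSignWord y) :
    (Finset.univ.filter fun j => -(x j) ≠ y j)
      = Finset.univ.filter fun j => ¬ (x j ≠ y j) := by
  apply Finset.filter_congr
  intro j _
  rcases hx j with h1 | h1 <;> rcases hy j with h2 | h2 <;> simp [h1, h2] <;> norm_num

/-- **Cover purification.** Suppose `lft : {−1,1}ⁿ → {−1,1}^E` is multiplicative and a
`(1/2+ε₀, 2ε)`-parity sampler, `L = {y ∈ lft(C₁) : Δ(y,ỹ) ≤ 1/2 − √ε}`, `M` is a finite
`2ε`-bias cover of `L`, and `Dec` uniquely decodes `C₁` within radius `1/4 − ε₀/2`.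
Then every `y ∈ L` equals `lft (Dec z')` or `lft (Dec (−z'))` for some `z' ∈ M`. -/
theorem stmt_11 (n : ℕ) (hn : 0 < n)
    (E : Type) [Fintype E] [Nonempty E]
    (ε₀ ε : ℝ) (hε₀ : 0 < ε₀) (hε0 : 0 < ε) (hε1 : ε < 1)
    (lft : (Fin n → ℝ) → E → ℝ)
    (hlftsign : ∀ z, IsSignWord z → IsSignWord (lft z))
    (hmul : ∀ z z' : Fin n → ℝ, IsSignWord z → IsSignWord z' →
      lft (fun i => z i * z' i) = fun e => lft z e * lft z' e)
    (hps : ∀ w : Fin n → ℝ, IsSignWord w →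
      |(∑ i, w i) / (n : ℝ)| ≤ 1/2 + ε₀ →
      |(∑ e, lft w e) / (Fintype.card E : ℝ)| ≤ 2 * ε)
    (C₁ : Set (Fin n → ℝ)) (hC₁ : ∀ z ∈ C₁, IsSignWord z)
    (yt : E → ℝ) (hyt : IsSignWord yt)
    (M : Set (Fin n → ℝ)) (hMfin : M.Finite) (hM : ∀ z' ∈ M, IsSignWord z')
    (hcover : ∀ y ∈ lft '' C₁, relHamR y yt ≤ 1/2 - Real.sqrt ε →
      ∃ z' ∈ M, 2 * ε < |(∑ e, y e * lft z' e) / (Fintype.card E : ℝ)|)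
    (Dec : (Fin n → ℝ) → (Fin n → ℝ))
    (hDec : ∀ w, IsSignWord w → ∀ z ∈ C₁, relHamR w z ≤ 1/4 - ε₀/2 → Dec w = z)
    (y : E → ℝ) (hy : y ∈ lft '' C₁) (hyd : relHamR y yt ≤ 1/2 - Real.sqrt ε) :
    (∃ z' ∈ M, y = lft (Dec z')) ∨ (∃ z' ∈ M, y = lft (Dec fun i => -(z' i))) := by
  obtain ⟨z, hzC, rfl⟩ := hy
  obtain ⟨z', hz'M, hbias⟩ := hcover _ ⟨z, hzC, rfl⟩ hyd
  have hz : IsSignWord z := hC₁ z hzC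
  have hz' : IsSignWord z' := hM z' hz'M
  -- the product word
  set w : Fin n → ℝ := fun i => z' i * z i with hw_def
  have hw : IsSignWord w := fun i => by
    rcases hz' i with h1 | h1 <;> rcases hz i with h2 | h2 <;>
      simp [hw_def, h1, h2]
  -- rewrite the bias sum
  have hsum : (∑ e, lft z e * lft z' e) = ∑ e, lft w e := by
    have := hmul z' z hz' hz
    exact Finset.sum_congr rfl fun e _ => by rw [this]; ring
  rw [hsum] at hbias
  -- parity sampler contrapositive
  have hbig : 1/2 + ε₀ < |(∑ i, w i) / (n : ℝ)| := by
    by_contra h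
    push_neg at h
    exact absurd (hps w hw h) (not_le.mpr hbias)
  -- sum over n in terms of relHam
  have hninst : Nonempty (Fin n) := ⟨⟨0, hn⟩⟩
  have havg : (∑ i, w i) / (n : ℝ) = 1 - 2 * relHamR z' z := by
    have := relHam_avg hz' hz
    simpa [hw_def, Fintype.card_fin] using this
  rw [havg] at hbig
  set d := relHamR z' z with hd_def
  have hle : (Finset.univ.filter fun j => z' j ≠ z j).card ≤ Fintype.card (Fin n) :=
    le_of_le_of_eq (Finset.card_filter_le _ _) Finset.card_univ
  have hc : ((Fintype.card (Fin n) : ℝ)) ≠ 0 := by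
    simp [Fintype.card_fin]; omega
  rcases lt_or_ge (1 - 2*d) 0 with hcase | hcase
  · -- |1-2d| = 2d-1 > 1/2+ε₀, so d > 3/4 + ε₀/2 ; use -z'
    have habs : 2*d - 1 > 1/2 + ε₀ := by
      have : |1 - 2*d| = 2*d - 1 := by rw [abs_of_neg hcase]; ring
      linarith [this ▸ hbig]
    right
    refine ⟨z', hz'M, ?_⟩
    have hneg : relHamR (fun i => -(z' i)) z = 1 - d := by
      rw [relHamR, relHam_neg hz' hz, Finset.filter_not,
        Finset.card_sdiff_of_subset (Finset.filter_subset _ _), Finset.card_univ,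
        Nat.cast_sub hle, hd_def, relHamR, sub_div, div_self hc]
    have := hDec (fun i => -(z' i)) (fun i => by rcases hz' i with h | h <;> simp [h])
      z hzC (by rw [hneg]; linarith)
    rw [this]
  · -- 1-2d > 1/2+ε₀, so d < 1/4 - ε₀/2 ; use z'
    have habs : 1 - 2*d > 1/2 + ε₀ := by
      have : |1 - 2*d| = 1 - 2*d := abs_of_nonneg hcase
      linarith [this ▸ hbig]
    left
    refine ⟨z', hz'M, ?_⟩
    have := hDec z' hz' z hzC (by linarith)
    rw [this]
end

section
/- Let G be a d-regular simple graph on V = {1,…,n} with d ≥ 1, and let k₁, k₂ ≥ 1. Let A ∈ ℝ^{V×V} be the normalized adjacency matrix, A(u,v) = 1/d if u and v are adjacent and 0 otherwise, and let S ∈ ℝ^{W_G(k₁) × W_G(k₂)} be the swap matrix with S(w, w') = 1/d^{k₂} if the concatenation ww' lies in W_G(k₁+k₂) (equivalently, w_{k₁} is adjacent to w'₁) and 0 otherwise. Then there exist bijections e₁ : W_G(k₁) → V × {1,…,d^{k₁−1}} and e₂ : W_G(k₂) → V × {1,…,d^{k₂−1}} whose first components satisfy (e₁ w)₁ = w_{k₁}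 and (e₂ w')₁ = w'₁, such that for all w ∈ W_G(k₁) and w' ∈ W_G(k₂): S(w, w') = (A ⊗ (1/d^{k₂−1})·J)(e₁ w, e₂ w'), where J is the all-ones matrix of size d^{k₁−1} × d^{k₂−1} and ⊗ denotes the Kronecker (tensor) product. That is, up to these reindexings, S = A ⊗ J/d^{k₂−1}. -/
open Finset
open scoped Classical

/-- `w : Fin k → V` is a walk in `G`: consecutive vertices are adjacent. -/
def IsWalk {V : Type*} (G : SimpleGraph V) {k : ℕ} (w : Fin k → V) : Prop :=
  ∀ (m : ℕ) (h : m + 1 < k), G.Adj (w ⟨m, by omega⟩) (w ⟨m + 1, h⟩)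

section Aux

variable {V : Type} [Fintype V] [DecidableEq V]

lemma isWalk_init {G : SimpleGraph V} {k : ℕ} {w : Fin (k + 2) → V} (hw : IsWalk G w) :
    IsWalk G (Fin.init w) := by
  intro m h
  have := hw m (by omega)
  simpa [Fin.init] using this

lemma card_walk_end (G : SimpleGraph V) {d : ℕ} (hreg : G.IsRegularOfDegree d) :
    ∀ (k : ℕ) (v : V),
      Fintype.card {w : Fin (k + 1) → V // IsWalk G w ∧ w (Fin.last k) = v} = d ^ k := by
  intro k
  induction k with
  | zero =>
    intro v
    rw [pow_zero, Fintype.card_eq_one_iff]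
    refine ⟨⟨fun _ => v, ⟨?_, rfl⟩⟩, ?_⟩
    · intro m h; exact absurd h (by omega)
    · rintro ⟨w, hw, hlast⟩
      apply Subtype.ext
      funext i
      show w i = v
      have hi : i = Fin.last 0 := Fin.ext (by omega)
      rw [hi, hlast]
  | succ k ih =>
    intro v
    have hE : ∀ (w : Fin (k + 2) → V), IsWalk G w →
        G.Adj (w (Fin.castSucc (Fin.last k))) (w (Fin.last (k + 1))) := by
      intro w hw
      have := hw k (by omega)
      have e1 : Fin.castSucc (Fin.last k) = (⟨k, by omega⟩ : Fin (k + 2)) := Fin.ext rfl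
      have e2 : Fin.last (k + 1) = (⟨k + 1, by omega⟩ : Fin (k + 2)) := Fin.ext rfl
      rw [e1, e2]; exact this
    let E : {w : Fin (k + 2) → V // IsWalk G w ∧ w (Fin.last (k + 1)) = v} ≃
        {w : Fin (k + 1) → V // IsWalk G w ∧ G.Adj (w (Fin.last k)) v} :=
      { toFun := fun w => ⟨Fin.init w.1, isWalk_init w.2.1, by
          have := hE w.1 w.2.1
          rw [w.2.2] at this
          simpa [Fin.init] using this⟩
        invFun := fun w' => ⟨Fin.snoc w'.1 v, by
          refine ⟨?_, Fin.snoc_last _ _⟩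
          intro m h
          rcases lt_or_ge (m + 1) (k + 1) with hm | hm
          · have e1 : (⟨m, by omega⟩ : Fin (k + 2)) = Fin.castSucc ⟨m, by omega⟩ := Fin.ext rfl
            have e2 : (⟨m + 1, h⟩ : Fin (k + 2)) = Fin.castSucc ⟨m + 1, hm⟩ := Fin.ext rfl
            rw [e1, e2, Fin.snoc_castSucc, Fin.snoc_castSucc]
            exact w'.2.1 m hm
          · have hm'' : m = k := by omega
            subst hm''
            have e1 : (⟨m, by omega⟩ : Fin (m + 2)) = Fin.castSucc (Fin.last m) := Fin.ext rfl
            have e2 : (⟨m + 1, h⟩ : Fin (m + 2)) = Fin.last (m + 1) := Fin.ext rfl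
            rw [e1, e2, Fin.snoc_castSucc, Fin.snoc_last]
            exact w'.2.2⟩
        left_inv := fun w => by
          apply Subtype.ext
          have h := Fin.snoc_init_self (n := k + 1) (α := fun _ => V) w.1
          rw [w.2.2] at h
          exact h
        right_inv := fun w' => by
          apply Subtype.ext
          exact Fin.init_snoc (n := k + 1) (α := fun _ => V) v w'.1 }
    rw [Fintype.card_congr E, Fintype.card_subtype]
    rw [Finset.card_eq_sum_card_fiberwise
      (f := fun w : Fin (k + 1) → V => w (Fin.last k)) (t := Finset.univ) (fun x _ => mem_univ _)]
    have key : ∀ u : V,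
        (Finset.filter (fun w : Fin (k + 1) → V => w (Fin.last k) = u)
          (Finset.filter (fun w => IsWalk G w ∧ G.Adj (w (Fin.last k)) v) Finset.univ)).card
          = if G.Adj u v then d ^ k else 0 := by
      intro u
      rw [Finset.filter_filter]
      by_cases hadj : G.Adj u v
      · rw [if_pos hadj, ← ih u, Fintype.card_subtype]
        congr 1
        apply Finset.filter_congr
        intro w _
        constructor
        · rintro ⟨⟨h1, _⟩, h3⟩; exact ⟨h1, h3⟩
        · rintro ⟨h1, h3⟩; exact ⟨⟨h1, by rw [h3]; exact hadj⟩, h3⟩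
      · rw [if_neg hadj, Finset.card_eq_zero, Finset.filter_eq_empty_iff]
        rintro w - ⟨⟨-, h2⟩, h3⟩
        exact hadj (h3 ▸ h2)
    calc (∑ u : V, (Finset.filter (fun w : Fin (k + 1) → V => w (Fin.last k) = u)
          (Finset.filter (fun w => IsWalk G w ∧ G.Adj (w (Fin.last k)) v) Finset.univ)).card)
        = ∑ u : V, if G.Adj u v then d ^ k else 0 := by
          exact Finset.sum_congr rfl fun u _ => key u
      _ = ∑ u ∈ Finset.filter (fun u => G.Adj u v) Finset.univ, d ^ k := by
          rw [Finset.sum_filter]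
      _ = (Finset.filter (fun u => G.Adj u v) Finset.univ).card * d ^ k := by
          rw [Finset.sum_const, smul_eq_mul]
      _ = d * d ^ k := by
          congr 1
          have : Finset.filter (fun u => G.Adj u v) Finset.univ = G.neighborFinset v := by
            ext u
            simp [SimpleGraph.mem_neighborFinset, G.adj_comm]
          rw [this]
          exact hreg v
      _ = d ^ (k + 1) := by rw [pow_succ]; ring

lemma isWalk_rev {G : SimpleGraph V} {k : ℕ} {w : Fin (k + 1) → V} (hw : IsWalk G w) :
    IsWalk G (fun i => w i.rev) := by
  intro m h
  show G.Adj (w (Fin.rev ⟨m, by omega⟩)) (w (Fin.rev ⟨m + 1, h⟩))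
  have e1 : Fin.rev (⟨m, by omega⟩ : Fin (k + 1)) = ⟨k - m - 1 + 1, by omega⟩ :=
    Fin.ext (by rw [Fin.val_rev]; simp; omega)
  have e2 : Fin.rev (⟨m + 1, h⟩ : Fin (k + 1)) = ⟨k - m - 1, by omega⟩ :=
    Fin.ext (by rw [Fin.val_rev]; simp; omega)
  rw [e1, e2]
  exact (hw (k - m - 1) (by omega)).symm

lemma card_walk_start (G : SimpleGraph V) {d : ℕ} (hreg : G.IsRegularOfDegree d)
    (k : ℕ) (v : V) :
    Fintype.card {w : Fin (k + 1) → V // IsWalk G w ∧ w 0 = v} = d ^ k := by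
  rw [← card_walk_end G hreg k v]
  apply Fintype.card_congr
  refine ⟨fun w => ⟨fun i => w.1 i.rev, isWalk_rev w.2.1, ?_⟩,
          fun w => ⟨fun i => w.1 i.rev, isWalk_rev w.2.1, ?_⟩, ?_, ?_⟩
  · show w.1 (Fin.rev (Fin.last k)) = v
    rw [Fin.rev_last]; exact w.2.2
  · show w.1 (Fin.rev 0) = v
    rw [Fin.rev_zero]; exact w.2.2
  · intro w; apply Subtype.ext; funext i; simp
  · intro w; apply Subtype.ext; funext i; simp

noncomputable def fiberEquiv {α : Type*} [Fintype α] (f : α → V) (N : ℕ)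
    (hcard : ∀ v : V, Fintype.card {a : α // f a = v} = N) :
    α ≃ V × Fin N :=
  (Equiv.sigmaFiberEquiv f).symm.trans
    ((Equiv.sigmaCongrRight fun v => Fintype.equivFinOfCardEq (hcard v)).trans
      (Equiv.sigmaEquivProd V (Fin N)))

lemma fiberEquiv_fst {α : Type*} [Fintype α] (f : α → V) (N : ℕ)
    (hcard : ∀ v : V, Fintype.card {a : α // f a = v} = N) (a : α) :
    (fiberEquiv f N hcard a).1 = f a := rfl

lemma isWalk_append_iff {G : SimpleGraph V} {k l : ℕ} {w : Fin (k + 1) → V}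
    {w' : Fin (l + 1) → V} (hw : IsWalk G w) (hw' : IsWalk G w') :
    IsWalk G (Fin.append w w') ↔ G.Adj (w (Fin.last k)) (w' 0) := by
  constructor
  · intro h
    have := h k (by omega)
    have e1 : (⟨k, by omega⟩ : Fin (k + 1 + (l + 1))) = Fin.castAdd (l + 1) (Fin.last k) :=
      Fin.ext rfl
    have e2 : (⟨k + 1, by omega⟩ : Fin (k + 1 + (l + 1))) = Fin.natAdd (k + 1) 0 :=
      Fin.ext (by simp)
    rw [e1, e2, Fin.append_left, Fin.append_right] at this
    exact this
  · intro hadj m h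
    rcases lt_or_ge (m + 1) (k + 1) with hm | hm
    · have e1 : (⟨m, by omega⟩ : Fin (k + 1 + (l + 1))) = Fin.castAdd (l + 1) ⟨m, by omega⟩ :=
        Fin.ext rfl
      have e2 : (⟨m + 1, h⟩ : Fin (k + 1 + (l + 1))) = Fin.castAdd (l + 1) ⟨m + 1, hm⟩ :=
        Fin.ext rfl
      rw [e1, e2, Fin.append_left, Fin.append_left]
      exact hw m hm
    · rcases eq_or_lt_of_le hm with hm' | hm'
      · have hm'' : m = k := by omega
        subst hm''
        have e1 : (⟨m, by omega⟩ : Fin (m + 1 + (l + 1))) = Fin.castAdd (l + 1) (Fin.last m) :=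
          Fin.ext rfl
        have e2 : (⟨m + 1, h⟩ : Fin (m + 1 + (l + 1))) = Fin.natAdd (m + 1) 0 :=
          Fin.ext (by simp)
        rw [e1, e2, Fin.append_left, Fin.append_right]
        exact hadj
      · have e1 : (⟨m, by omega⟩ : Fin (k + 1 + (l + 1)))
            = Fin.natAdd (k + 1) ⟨m - (k + 1), by omega⟩ := Fin.ext (by simp; omega)
        have e2 : (⟨m + 1, h⟩ : Fin (k + 1 + (l + 1)))
            = Fin.natAdd (k + 1) ⟨m - (k + 1) + 1, by omega⟩ := Fin.ext (by simp; omega)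
        rw [e1, e2, Fin.append_right, Fin.append_right]
        exact hw' (m - (k + 1)) (by omega)

end Aux

set_option maxHeartbeats 1000000 in
/-- **Kronecker structure of the swap matrix.** For a `d`-regular graph `G` and
`k₁, k₂ ≥ 1`, there are bijections between the walk sets `W_G(kᵢ)` and `V × [dᵏⁱ⁻¹]`
(recording the last vertex of `w`, resp. the first vertex of `w'`, in the first
component) under which the swap matrix `S(w,w') = 1/d^{k₂}·1[ww' is a walk]` equals the
Kronecker product `A ⊗ J/d^{k₂−1}` of the normalized adjacency matrix `A` with the
(scaled) all-ones matrix `J`. -/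
theorem stmt_15 (V : Type) [Fintype V] [DecidableEq V] [Nonempty V]
    (G : SimpleGraph V) (d : ℕ) (hd : 1 ≤ d) (hreg : G.IsRegularOfDegree d)
    (k₁ k₂ : ℕ) (hk₁ : 1 ≤ k₁) (hk₂ : 1 ≤ k₂) :
    ∃ (e₁ : {w : Fin k₁ → V // IsWalk G w} ≃ V × Fin (d ^ (k₁ - 1)))
      (e₂ : {w : Fin k₂ → V // IsWalk G w} ≃ V × Fin (d ^ (k₂ - 1))),
      (∀ w : {w : Fin k₁ → V // IsWalk G w}, (e₁ w).1 = w.1 ⟨k₁ - 1, by omega⟩)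
      ∧ (∀ w' : {w : Fin k₂ → V // IsWalk G w}, (e₂ w').1 = w'.1 ⟨0, by omega⟩)
      ∧ ∀ (w : {w : Fin k₁ → V // IsWalk G w}) (w' : {w : Fin k₂ → V // IsWalk G w}),
          (if IsWalk G (Fin.append w.1 w'.1) then (1 : ℝ) / (d : ℝ) ^ k₂ else 0)
            = Matrix.kroneckerMap (· * ·)
                (Matrix.of fun u v : V => if G.Adj u v then (1 : ℝ) / (d : ℝ) else 0)
                (Matrix.of fun (_ : Fin (d ^ (k₁ - 1))) (_ : Fin (d ^ (k₂ - 1))) =>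
                  (1 : ℝ) / (d : ℝ) ^ (k₂ - 1))
                (e₁ w) (e₂ w') := by
  obtain ⟨k, rfl⟩ : ∃ k, k₁ = k + 1 := ⟨k₁ - 1, by omega⟩
  obtain ⟨l, rfl⟩ : ∃ l, k₂ = l + 1 := ⟨k₂ - 1, by omega⟩
  have hcard1 : ∀ v : V,
      Fintype.card {a : {w : Fin (k + 1) → V // IsWalk G w} // a.1 (Fin.last k) = v}
        = d ^ k := by
    intro v
    exact (Fintype.card_congr (Equiv.subtypeSubtypeEquivSubtypeInter
      (fun w : Fin (k + 1) → V => IsWalk G w)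
      (fun w => w (Fin.last k) = v))).trans (card_walk_end G hreg k v)
  have hcard2 : ∀ v : V,
      Fintype.card {a : {w : Fin (l + 1) → V // IsWalk G w} // (a.1 : Fin (l + 1) → V) 0 = v} = d ^ l := by
    intro v
    exact (Fintype.card_congr (Equiv.subtypeSubtypeEquivSubtypeInter
      (fun w : Fin (l + 1) → V => IsWalk G w)
      (fun w => w 0 = v))).trans (card_walk_start G hreg l v)
  refine ⟨fiberEquiv (fun a => a.1 (Fin.last k)) (d ^ k) hcard1,
          fiberEquiv (fun a => (a.1 : Fin (l + 1) → V) 0) (d ^ l) hcard2, ?_, ?_, ?_⟩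
  · intro w; rfl
  · intro w'; rfl
  intro w w'
  show _ = (if G.Adj (w.1 (Fin.last k)) (w'.1 0) then (1 : ℝ) / (d : ℝ) else 0)
      * ((1 : ℝ) / (d : ℝ) ^ l)
  rw [isWalk_append_iff w.2 w'.2]
  by_cases hadj : G.Adj (w.1 (Fin.last k)) (w'.1 0)
  · rw [if_pos hadj, if_pos hadj]
    show (1 : ℝ) / (d : ℝ) ^ (l + 1) = 1 / d * (1 / (d : ℝ) ^ l)
    rw [pow_succ]; ring
  · rw [if_neg hadj, if_neg hadj, zero_mul]
end

section
/- Let G be a d-regular simple graph on a nonempty finite vertex set V with d ≥ 1, and let γ ≥ 0 be such that G is a γ-two-sided spectral expander in the following sense: for all u, v : V → ℝ with E_{a∈V} u(a) = 0 and E_{b∈V} v(b) = 0, |E_{(a,b)}[u(a)·v(b)]| ≤ γ·√(E_{a∈V} u(a)²)·√(E_{b∈V} v(b)²), where (a,b) is a uniformly random ordered pair of adjacent vertices. Then for all k₁, k₂ ≥ 1 and all f : W_G(k₁) → ℝ, g : W_G(k₂) → ℝ with E_{w∈W_G(k₁)} f(w) = 0 and E_{w'∈W_G(k₂)} g(w')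 = 0 (uniform averages), |E_{v∈W_G(k₁+k₂)}[ f(v(1,k₁))·g(v(k₁+1, k₁+k₂)) ]| ≤ γ·√(E_{w∈W_G(k₁)} f(w)²)·√(E_{w'∈W_G(k₂)} g(w')²). Equivalently, the second singular value of every swap operator between walk sets of G is at most γ, so the collection of walks on G is (γ,1)-splittable. -/
open Finset
open scoped Classical

/-- The set `W_G(k)` of walks on `k` vertices of `G`. -/
noncomputable def walkSet {V : Type*} [Fintype V] (G : SimpleGraph V) (k : ℕ) :
    Finset (Fin k → V) :=
  Finset.univ.filter fun w => IsWalk G w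

/-!
Cut a walk on `k₁ + k₂` vertices into its first `k₁` and its last `k₂` vertices. In a
`d`-regular graph exactly `d ^ k` walks on `k + 1` vertices start (or end) at a given vertex, so
the correlation of `f` and `g` along walks equals the correlation, over adjacent pairs `(a, b)`,
of the conditional means `u a = E[f | last vertex = a]` and `v b = E[g | first vertex = b]`.
These have mean zero and, by Jensen, second moments at most those of `f` and `g`, so the
expansion hypothesis applied to `u` and `v` gives the bound.
-/

section FiberMean

variable {ι κ : Type*} [Fintype κ]

noncomputable def fiberMean (s : Finset ι) (p : ι → κ) (f : ι → ℝ) (j : κ) : ℝ :=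
  (∑ i ∈ s with p i = j, f i) / #{i ∈ s | p i = j}

variable {s : Finset ι} {p : ι → κ} {c : ℕ}

theorem card_eq_card_mul_of_card_fiber_eq (hc : ∀ j, #{i ∈ s | p i = j} = c) :
    #s = Fintype.card κ * c := by
  rw [card_eq_sum_card_fiberwise (f := p) (t := univ) fun _ _ ↦ mem_univ _]
  simp [hc]

theorem sum_fiberMean_div_card (hc : ∀ j, #{i ∈ s | p i = j} = c) (f : ι → ℝ) :
    (∑ j, fiberMean s p f j) / Fintype.card κ = (∑ i ∈ s, f i) / #s := by
  simp only [fiberMean, hc, ← sum_div]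
  rw [card_eq_card_mul_of_card_fiber_eq hc, Nat.cast_mul, div_div, mul_comm]
  exact congrArg (· / _) (sum_fiberwise s p f)

theorem sum_fiberMean_sq_div_card_le (hc : ∀ j, #{i ∈ s | p i = j} = c) (f : ι → ℝ) :
    (∑ j, fiberMean s p f j ^ 2) / Fintype.card κ ≤ (∑ i ∈ s, f i ^ 2) / #s := by
  calc (∑ j, fiberMean s p f j ^ 2) / Fintype.card κ
      ≤ (∑ j, (∑ i ∈ s with p i = j, f i ^ 2) / c) / Fintype.card κ := by
        gcongr with j
        rw [fiberMean, ← hc j]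
        exact sum_div_card_sq_le_sum_sq_div_card
    _ = (∑ i ∈ s, f i ^ 2) / #s := by
        rw [← sum_div, card_eq_card_mul_of_card_fiber_eq hc, Nat.cast_mul, div_div, mul_comm]
        exact congrArg (· / _) (sum_fiberwise s p _)

end FiberMean

section Walks

variable {V : Type*} (G : SimpleGraph V)

theorem isWalk_iff_adj_castSucc_succ {k : ℕ} (w : Fin (k + 1) → V) :
    IsWalk G w ↔ ∀ i : Fin k, G.Adj (w i.castSucc) (w i.succ) :=
  ⟨fun hw i ↦ hw i i.succ.isLt, fun hw m h ↦ hw ⟨m, by omega⟩⟩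

theorem isWalk_cons_iff {k : ℕ} (a : V) (w : Fin (k + 1) → V) :
    IsWalk G (Fin.cons a w : Fin (k + 2) → V) ↔ G.Adj a (w 0) ∧ IsWalk G w := by
  simp only [isWalk_iff_adj_castSucc_succ, Fin.forall_fin_succ (n := k), Fin.cons_succ,
    ← Fin.succ_castSucc]
  rfl

theorem isWalk_comp_rev_iff {k : ℕ} (w : Fin k → V) :
    IsWalk G (w ∘ Fin.rev) ↔ IsWalk G w := by
  cases k with
  | zero => exact ⟨fun _ _ h ↦ absurd h (by omega), fun _ _ h ↦ absurd h (by omega)⟩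
  | succ k =>
    simp only [isWalk_iff_adj_castSucc_succ, Function.comp_apply, Fin.rev_castSucc,
      Fin.rev_succ, Fin.rev_surjective.forall (p := fun i ↦ G.Adj (w i.castSucc) (w i.succ))]
    exact forall_congr' fun i ↦ G.adj_comm _ _

theorem isWalk_iff_castAdd_natAdd {k₁ k₂ : ℕ} (v : Fin (k₁ + 1 + (k₂ + 1)) → V) :
    IsWalk G v ↔ IsWalk G (fun m ↦ v (Fin.castAdd (k₂ + 1) m)) ∧
      IsWalk G (fun m ↦ v (Fin.natAdd (k₁ + 1) m)) ∧
      G.Adj (v (Fin.castAdd (k₂ + 1) (Fin.last k₁))) (v (Fin.natAdd (k₁ + 1) 0)) := by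
  refine ⟨fun hv ↦ ⟨fun m h ↦ hv m (by omega), fun m h ↦ hv (k₁ + 1 + m) (by omega),
    hv k₁ (by omega)⟩, fun ⟨hl, hr, hjoin⟩ m h ↦ ?_⟩
  rcases lt_trichotomy m k₁ with hm | rfl | hm
  · exact hl m (by omega)
  · exact hjoin
  · obtain ⟨j, rfl⟩ : ∃ j, m = k₁ + 1 + j := ⟨m - (k₁ + 1), by omega⟩
    exact hr j (by omega)

variable [Fintype V] {G} {d : ℕ}

theorem mem_walkSet {k : ℕ} {w : Fin k → V} : w ∈ walkSet G k ↔ IsWalk G w := by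
  simp [walkSet]

theorem card_walkSet_filter_zero_eq (hreg : G.IsRegularOfDegree d) (k : ℕ) (a : V) :
    #{w ∈ walkSet G (k + 1) | w 0 = a} = d ^ k := by
  induction k generalizing a with
  | zero =>
    rw [pow_zero, card_eq_one]
    refine ⟨fun _ ↦ a, ?_⟩
    ext w
    simp [mem_walkSet, IsWalk, funext_iff, Fin.forall_fin_one]
  | succ k ih =>
    calc #{w ∈ walkSet G (k + 2) | w 0 = a}
        = #{w ∈ walkSet G (k + 1) | G.Adj a (w 0)} := by
          refine card_nbij' Fin.tail (fun w ↦ (Fin.cons a w : Fin (k + 2) → V))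
            (fun w hw ↦ ?_) (fun w hw ↦ ?_) (fun w hw ↦ ?_) (fun w _ ↦ Fin.tail_cons _ _)
          · simp only [mem_coe, mem_filter, mem_walkSet] at hw ⊢
            obtain ⟨hw, rfl⟩ := hw
            rw [← Fin.cons_self_tail w, isWalk_cons_iff] at hw
            exact hw.symm
          · simp_all [mem_walkSet, isWalk_cons_iff]
          · obtain ⟨-, rfl⟩ := mem_filter.1 hw
            exact Fin.cons_self_tail w
      _ = ∑ b ∈ G.neighborFinset a, #{w ∈ walkSet G (k + 1) | w 0 = b} := by
          rw [card_eq_sum_card_fiberwise (f := (· 0)) (t := G.neighborFinset a) fun w hw ↦ by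
            simpa using (mem_filter.1 hw).2]
          refine sum_congr rfl fun b hb ↦ congrArg card ?_
          ext w
          simp only [mem_filter, SimpleGraph.mem_neighborFinset] at hb ⊢
          exact ⟨fun h ↦ ⟨h.1.1, h.2⟩, fun h ↦ ⟨⟨h.1, h.2 ▸ hb⟩, h.2⟩⟩
      _ = d ^ (k + 1) := by
          rw [sum_congr rfl fun b _ ↦ ih b, sum_const, G.card_neighborFinset_eq_degree, hreg a,
            smul_eq_mul, pow_succ']

theorem card_walkSet_filter_last_eq (hreg : G.IsRegularOfDegree d) (k : ℕ) (a : V) :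
    #{w ∈ walkSet G (k + 1) | w (Fin.last k) = a} = d ^ k := by
  rw [← card_walkSet_filter_zero_eq hreg k a]
  refine card_nbij' (· ∘ Fin.rev) (· ∘ Fin.rev) (fun w hw ↦ ?_) (fun w hw ↦ ?_)
    (fun w _ ↦ ?_) (fun w _ ↦ ?_)
  · simp_all [mem_walkSet, isWalk_comp_rev_iff]
  · simp_all [mem_walkSet, isWalk_comp_rev_iff]
  all_goals funext i; simp

theorem card_walkSet (hreg : G.IsRegularOfDegree d) (k : ℕ) :
    #(walkSet G (k + 1)) = Fintype.card V * d ^ k := by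
  rw [card_eq_sum_card_fiberwise (f := (· 0)) (t := univ) fun _ _ ↦ mem_univ _]
  simp [card_walkSet_filter_zero_eq hreg]

theorem card_filter_adj (hreg : G.IsRegularOfDegree d) :
    #{p : V × V | G.Adj p.1 p.2} = Fintype.card V * d := by
  rw [card_filter, Fintype.sum_prod_type]
  simp [← G.neighborFinset_eq_filter, hreg _]

theorem sum_walkSet_add_eq_sum_adj {k₁ k₂ : ℕ}
    (F : (Fin (k₁ + 1) → V) → ℝ) (H : (Fin (k₂ + 1) → V) → ℝ) :
    ∑ v ∈ walkSet G (k₁ + 1 + (k₂ + 1)),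
        F (fun m ↦ v (Fin.castAdd (k₂ + 1) m)) * H (fun m ↦ v (Fin.natAdd (k₁ + 1) m))
      = ∑ p : V × V with G.Adj p.1 p.2,
          (∑ w ∈ walkSet G (k₁ + 1) with w (Fin.last k₁) = p.1, F w) *
            ∑ w ∈ walkSet G (k₂ + 1) with w 0 = p.2, H w := by
  set T := {q ∈ walkSet G (k₁ + 1) ×ˢ walkSet G (k₂ + 1) |
    G.Adj (q.1 (Fin.last k₁)) (q.2 0)}
  have hsplit : ∑ v ∈ walkSet G (k₁ + 1 + (k₂ + 1)),
        F (fun m ↦ v (Fin.castAdd (k₂ + 1) m)) * H (fun m ↦ v (Fin.natAdd (k₁ + 1) m))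
      = ∑ q ∈ T, F q.1 * H q.2 :=
    sum_equiv (Fin.appendEquiv _ _).symm
      (fun v ↦ by simp [T, mem_walkSet, isWalk_iff_castAdd_natAdd G v, and_assoc])
      fun _ _ ↦ rfl
  have hmaps : ∀ q ∈ T,
      (q.1 (Fin.last k₁), q.2 0) ∈ ({p : V × V | G.Adj p.1 p.2} : Finset _) :=
    fun q hq ↦ by simpa [T] using (mem_filter.1 hq).2
  rw [hsplit, ← sum_fiberwise_of_maps_to hmaps]
  refine sum_congr rfl fun p hp ↦ ?_
  rw [sum_mul_sum, ← sum_product']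
  refine sum_congr (ext fun q ↦ ?_) fun _ _ ↦ rfl
  simp only [T, mem_filter, mem_product, Prod.ext_iff]
  constructor
  · rintro ⟨⟨⟨h₁, h₂⟩, -⟩, e₁, e₂⟩
    exact ⟨⟨h₁, e₁⟩, h₂, e₂⟩
  · rintro ⟨⟨h₁, e₁⟩, h₂, e₂⟩
    exact ⟨⟨⟨h₁, h₂⟩, e₁ ▸ e₂ ▸ (mem_filter.1 hp).2⟩, e₁, e₂⟩

theorem sum_walkSet_add_div_card_eq (hreg : G.IsRegularOfDegree d) {k₁ k₂ : ℕ}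
    (F : (Fin (k₁ + 1) → V) → ℝ) (H : (Fin (k₂ + 1) → V) → ℝ) :
    (∑ v ∈ walkSet G (k₁ + 1 + (k₂ + 1)),
        F (fun m ↦ v (Fin.castAdd (k₂ + 1) m)) * H (fun m ↦ v (Fin.natAdd (k₁ + 1) m))) /
        #(walkSet G (k₁ + 1 + (k₂ + 1)))
      = (∑ p : V × V with G.Adj p.1 p.2,
          fiberMean (walkSet G (k₁ + 1)) (· (Fin.last k₁)) F p.1 *
            fiberMean (walkSet G (k₂ + 1)) (· 0) H p.2) / #{p : V × V | G.Adj p.1 p.2} := by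
  have hcard : #(walkSet G (k₁ + 1 + (k₂ + 1))) =
      #{p : V × V | G.Adj p.1 p.2} * d ^ k₁ * d ^ k₂ := by
    rw [card_filter_adj hreg]
    exact (card_walkSet hreg (k₁ + 1 + k₂)).trans (by ring)
  simp only [fiberMean, card_walkSet_filter_last_eq hreg, card_walkSet_filter_zero_eq hreg,
    div_mul_div_comm, ← sum_div, sum_walkSet_add_eq_sum_adj, hcard, Nat.cast_mul, Nat.cast_pow,
    div_div]
  ring

end Walks

theorem stmt_16_general (V : Type) [Fintype V]
    (G : SimpleGraph V) (d : ℕ) (hreg : G.IsRegularOfDegree d)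
    (γ : ℝ) (hγ : 0 ≤ γ)
    (hexp : ∀ u v : V → ℝ,
      (∑ a, u a) / (Fintype.card V : ℝ) = 0 →
      (∑ b, v b) / (Fintype.card V : ℝ) = 0 →
      |(∑ p ∈ Finset.univ.filter (fun p : V × V => G.Adj p.1 p.2), u p.1 * v p.2)
          / ((Finset.univ.filter (fun p : V × V => G.Adj p.1 p.2)).card : ℝ)|
        ≤ γ * Real.sqrt ((∑ a, u a ^ 2) / (Fintype.card V : ℝ))
            * Real.sqrt ((∑ b, v b ^ 2) / (Fintype.card V : ℝ)))
    (k₁ k₂ : ℕ) (hk₁ : 1 ≤ k₁) (hk₂ : 1 ≤ k₂)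
    (f : (Fin k₁ → V) → ℝ) (g : (Fin k₂ → V) → ℝ)
    (hf : (∑ w ∈ walkSet G k₁, f w) / ((walkSet G k₁).card : ℝ) = 0)
    (hg : (∑ w' ∈ walkSet G k₂, g w') / ((walkSet G k₂).card : ℝ) = 0) :
    |(∑ v ∈ walkSet G (k₁ + k₂),
        f (fun m => v (Fin.castAdd k₂ m)) * g (fun m => v (Fin.natAdd k₁ m)))
        / ((walkSet G (k₁ + k₂)).card : ℝ)|
      ≤ γ * Real.sqrt ((∑ w ∈ walkSet G k₁, f w ^ 2) / ((walkSet G k₁).card : ℝ))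
          * Real.sqrt ((∑ w' ∈ walkSet G k₂, g w' ^ 2) / ((walkSet G k₂).card : ℝ)) := by
  obtain ⟨k₁, rfl⟩ := Nat.exists_eq_add_of_le' hk₁
  obtain ⟨k₂, rfl⟩ := Nat.exists_eq_add_of_le' hk₂
  have hc₁ := card_walkSet_filter_last_eq hreg k₁
  have hc₂ := card_walkSet_filter_zero_eq hreg k₂
  rw [sum_walkSet_add_div_card_eq hreg]
  refine (hexp _ _ ((sum_fiberMean_div_card hc₁ f).trans hf)
    ((sum_fiberMean_div_card hc₂ g).trans hg)).trans ?_
  gcongr γ * √?_ * √?_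
  · exact sum_fiberMean_sq_div_card_le hc₁ f
  · exact sum_fiberMean_sq_div_card_le hc₂ g

/-- **Expander walks are splittable.** If `G` is a `d`-regular `γ`-two-sided spectral
expander (in the bilinear-form sense over uniformly random ordered adjacent pairs), then
for all `k₁, k₂ ≥ 1` and all mean-zero `f : W_G(k₁) → ℝ`, `g : W_G(k₂) → ℝ`,
`|E_{v∈W_G(k₁+k₂)}[f(v(1,k₁))·g(v(k₁+1,k₁+k₂))]| ≤ γ·√(E f²)·√(E g²)`;
i.e. every swap operator between walk sets has second singular value at most `γ`. -/
theorem stmt_16 (V : Type) [Fintype V] [Nonempty V]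
    (G : SimpleGraph V) (d : ℕ) (hd : 1 ≤ d) (hreg : G.IsRegularOfDegree d)
    (γ : ℝ) (hγ : 0 ≤ γ)
    (hexp : ∀ u v : V → ℝ,
      (∑ a, u a) / (Fintype.card V : ℝ) = 0 →
      (∑ b, v b) / (Fintype.card V : ℝ) = 0 →
      |(∑ p ∈ Finset.univ.filter (fun p : V × V => G.Adj p.1 p.2), u p.1 * v p.2)
          / ((Finset.univ.filter (fun p : V × V => G.Adj p.1 p.2)).card : ℝ)|
        ≤ γ * Real.sqrt ((∑ a, u a ^ 2) / (Fintype.card V : ℝ))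
            * Real.sqrt ((∑ b, v b ^ 2) / (Fintype.card V : ℝ)))
    (k₁ k₂ : ℕ) (hk₁ : 1 ≤ k₁) (hk₂ : 1 ≤ k₂)
    (f : (Fin k₁ → V) → ℝ) (g : (Fin k₂ → V) → ℝ)
    (hf : (∑ w ∈ walkSet G k₁, f w) / ((walkSet G k₁).card : ℝ) = 0)
    (hg : (∑ w' ∈ walkSet G k₂, g w') / ((walkSet G k₂).card : ℝ) = 0) :
    |(∑ v ∈ walkSet G (k₁ + k₂),
        f (fun m => v (Fin.castAdd k₂ m)) * g (fun m => v (Fin.natAdd k₁ m)))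
        / ((walkSet G (k₁ + k₂)).card : ℝ)|
      ≤ γ * Real.sqrt ((∑ w ∈ walkSet G k₁, f w ^ 2) / ((walkSet G k₁).card : ℝ))
          * Real.sqrt ((∑ w' ∈ walkSet G k₂, g w' ^ 2) / ((walkSet G k₂).card : ℝ)) :=
  stmt_16_general V G d hreg γ hγ hexp k₁ k₂ hk₁ hk₂ f g hf hg
end
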